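/- arXiv:math/0412329 — 2 statements merged into one kernel-verified Lean document; each statement's English description precedes it below -/
import Mathlib

section
/- Let A be an integral domain, let B be a commutative A-algebra that is flat as an A-module, and let f ∈ A. If the localization of B away from the image of f (i.e. B_f = B[1/f]) is an integral domain, then B is an integral domain. -/
/-!
Since `B_f` is nonzero, `f ≠ 0`, so `f` is a nonzerodivisor of the domain `A`. Flatness carries
this to its image in `B`, so `B` embeds into its localization `B_f` and inherits being a domain.
-/

open scoped nonZeroDivisors

theorem Module.Flat.algebraMap_mem_nonZeroDivisors {A B : Type*} [CommRing A] [CommRing B]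
    [Algebra A B] [Module.Flat A B] {f : A} (hf : f ∈ A⁰) : algebraMap A B f ∈ B⁰ :=
  isRegular_iff_mem_nonZeroDivisors.mp <| isLeftRegular_iff_isRegular.mp
    (IsSMulRegular.of_flat (isRegular_iff_mem_nonZeroDivisors.mpr hf).isSMulRegular).isLeftRegular

theorem IsLocalization.isDomain_of_isDomain_of_le_nonZeroDivisors {R : Type*} (S : Type*)
    [CommRing R] [CommRing S] [Algebra R S] {M : Submonoid R} [IsLocalization M S] [IsDomain S]
    (hM : M ≤ R⁰) : IsDomain R :=
  (IsLocalization.injective S hM).isDomain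

theorem IsLocalization.Away.not_isNilpotent {R : Type*} (S : Type*) [CommRing R] [CommRing S]
    [Algebra R S] (g : R) [IsLocalization.Away g S] [Nontrivial S] : ¬IsNilpotent g :=
  fun hg ↦ not_subsingleton S
    (IsLocalization.subsingleton (M := Submonoid.powers g) (isNilpotent_iff_zero_mem_powers.mp hg))

/-- Let `A` be an integral domain, `B` a commutative `A`-algebra that is flat as an
`A`-module, and `f ∈ A`. If the localization `B_f = B[1/f]` of `B` away from the image
of `f` is an integral domain, then `B` is an integral domain. -/
theorem flat_algebra_isDomain_of_isDomain_away
    {A B : Type*} [CommRing A] [IsDomain A] [CommRing B] [Algebra A B]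
    [Module.Flat A B] (f : A)
    (h : IsDomain (Localization.Away (algebraMap A B f))) :
    IsDomain B := by
  have hf : f ≠ 0 := by
    rintro rfl
    exact IsLocalization.Away.not_isNilpotent (Localization.Away (algebraMap A B 0))
      (algebraMap A B 0) (by rw [map_zero]; exact .zero)
  have hg : algebraMap A B f ∈ B⁰ :=
    Module.Flat.algebraMap_mem_nonZeroDivisors (mem_nonZeroDivisors_of_ne_zero hf)
  exact IsLocalization.isDomain_of_isDomain_of_le_nonZeroDivisors
    (Localization.Away (algebraMap A B f)) (Submonoid.powers_le.mpr hg)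
end

section
/- Let k be a field and let A be a finitely generated commutative k-algebra. Then A is generated as a k-algebra by its group of units Aˣ if and only if there exist a natural number n and a surjective k-algebra homomorphism from the Laurent polynomial algebra k[t₁^{±1},…,t_n^{±1}] (the monoid algebra of the free abelian group ℤⁿ over k) onto A. (This expresses the fact that a connected affine variety X is a closed subvariety of an algebraic torus if and only if its ring of regular functions O(X) is generated by its units O*(X); such varieties are called very affine.) -/
/-!
Units form a submonoid, so the subalgebra they generate is just their `k`-linear span. If it is
all of `A` and `A` is finitely generated, each generator lies in the span of finitely many units,
and sending the coordinate monomials `tᵢ` of `k[ℤⁿ]` to these units gives a surjection.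
Conversely, the monomials of `k[ℤⁿ]` are units spanning it, and a surjection carries units to
units.
-/

open Algebra Submodule AddMonoidAlgebra

section

variable {k A : Type*} [CommSemiring k] [CommSemiring A] [Algebra k A]

theorem Algebra.toSubmodule_adjoin_isUnit :
    Subalgebra.toSubmodule (adjoin k {a : A | IsUnit a}) = span k {a : A | IsUnit a} := by
  rw [adjoin_eq_span]
  exact congrArg (span k <| SetLike.coe ·) (Submonoid.closure_eq (IsUnit.submonoid A))

theorem Algebra.exists_finset_isUnit_adjoin_eq_top [hA : FiniteType k A]
    (h : adjoin k {a : A | IsUnit a} = ⊤) :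
    ∃ T : Finset A, (∀ a ∈ T, IsUnit a) ∧ adjoin k (T : Set A) = ⊤ := by
  classical
  obtain ⟨S, hS⟩ := hA.out
  have hspan (a : A) : ∃ T : Finset A, ↑T ⊆ {a : A | IsUnit a} ∧ a ∈ span k (T : Set A) :=
    mem_span_finite_of_mem_span (by simp [← toSubmodule_adjoin_isUnit, h])
  choose T hT_isUnit hT_mem using hspan
  refine ⟨S.biUnion T, fun a ha => ?_, ?_⟩
  · obtain ⟨s, -, has⟩ := Finset.mem_biUnion.1 ha
    exact hT_isUnit s has
  · rw [_root_.eq_top_iff, ← hS, adjoin_le_iff]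
    intro s hs
    refine adjoin_mono ?_ (span_le_adjoin k _ (hT_mem s))
    exact Finset.coe_subset.2 (Finset.subset_biUnion_of_mem T hs)

variable {ι : Type*}

noncomputable def AddMonoidAlgebra.liftUnits (u : ι → Aˣ) : k[ι →₀ ℤ] →ₐ[k] A :=
  lift k A (ι →₀ ℤ) <| (Units.coeHom A).comp <| AddMonoidHom.toMultiplicativeLeft
    (Finsupp.linearCombination ℤ fun i => Additive.ofMul (u i)).toAddMonoidHom

theorem AddMonoidAlgebra.liftUnits_single (u : ι → Aˣ) (i : ι) :
    liftUnits u (single (Finsupp.single i 1) (1 : k)) = u i := by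
  simp [liftUnits]

theorem AddMonoidAlgebra.adjoin_range_le_range_liftUnits (u : ι → Aˣ) :
    adjoin k (Set.range fun i => (u i : A)) ≤ (liftUnits u : k[ι →₀ ℤ] →ₐ[k] A).range := by
  rw [adjoin_le_iff]
  rintro _ ⟨i, rfl⟩
  exact ⟨_, liftUnits_single u i⟩

theorem AddMonoidAlgebra.adjoin_isUnit_eq_top (G : Type*) [AddGroup G] :
    adjoin k {x : k[G] | IsUnit x} = ⊤ := by
  refine top_unique fun x _ => adjoin_mono ?_ (mem_adjoin_support x)
  rintro _ ⟨g, -, rfl⟩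
  exact (Group.isUnit (Multiplicative.ofAdd g)).map (of k G)

theorem Algebra.adjoin_isUnit_eq_top_of_surjective {B : Type*} [CommSemiring B] [Algebra k B]
    (f : A →ₐ[k] B) (hf : Function.Surjective f) (h : adjoin k {a : A | IsUnit a} = ⊤) :
    adjoin k {b : B | IsUnit b} = ⊤ := by
  rw [_root_.eq_top_iff, ← (AlgHom.range_eq_top f).2 hf, ← Algebra.map_top, ← h, ← adjoin_image]
  refine adjoin_mono ?_
  rintro _ ⟨a, ha, rfl⟩
  exact ha.map f

end

/-- A finitely generated commutative algebra `A` over a field `k` is generated as a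
`k`-algebra by its units if and only if it is a quotient of some Laurent polynomial
algebra `k[t₁^{±1}, …, t_n^{±1}]` (the monoid algebra of the free abelian group `ℤⁿ`
over `k`).  Geometrically: a connected affine variety is a closed subvariety of an
algebraic torus iff its ring of regular functions is generated by units
("very affine" varieties). -/
theorem adjoin_units_eq_top_iff_surjective_from_laurent
    {k A : Type*} [Field k] [CommRing A] [Algebra k A]
    (hA : Algebra.FiniteType k A) :
    Algebra.adjoin k {a : A | IsUnit a} = ⊤ ↔
      ∃ (n : ℕ) (φ : AddMonoidAlgebra k (Fin n →₀ ℤ) →ₐ[k] A),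
        Function.Surjective φ := by
  constructor
  · intro h
    obtain ⟨T, hT_isUnit, hT⟩ := exists_finset_isUnit_adjoin_eq_top h
    let u (i : Fin T.card) : Aˣ := (hT_isUnit _ (T.equivFin.symm i).2).unit
    refine ⟨T.card, liftUnits u, ?_⟩
    rw [← AlgHom.range_eq_top, _root_.eq_top_iff, ← hT]
    refine le_trans (adjoin_mono ?_) (adjoin_range_le_range_liftUnits u)
    exact fun a ha => ⟨T.equivFin ⟨a, ha⟩, by simp [u]⟩
  · rintro ⟨n, φ, hφ⟩
    exact adjoin_isUnit_eq_top_of_surjective φ hφ (adjoin_isUnit_eq_top _)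
end
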